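/- Let λ₁ = √(4B² + J²γ̃²) with J, B ≥ 0, 0 ≤ γ̃ ≤ 1, λ₁ > 0. The ground state Ψ = ∓√((λ₁ ∓ 2B)/(2λ₁))|00⟩ + √((λ₁ ± 2B)/(2λ₁))|11⟩ has concurrence C(Ψ) = √((λ₁² − 4B²)/λ₁²) and maximal Bell violation γ = 2√(1 + (λ₁² − 4B²)/λ₁²) = 2√(1 + C²). -/

import Mathlib

/-!
For `ψ = α|00⟩ + β|11⟩` with `α² + β² = 1` the reduced state is `diag(α², β²)`, so
`C² = 2(1 - α⁴ - β⁴) = c²` with `c = 2αβ`; for the ground state `c² = (λ₁² - 4B²)/λ₁²`.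

The CHSH expectation in `ψ` is `a ⬝ T(b + b') + a' ⬝ T(b - b')` with correlation matrix
`T = diag(c, -c, 1)`. As `b + b'` and `b - b'` are orthogonal with squared lengths summing to 4,
Cauchy–Schwarz and Bessel's inequality bound it by `2√(1 + c²)` (the two largest eigenvalues
of `TᵀT` are `1` and `c² ≤ 1`), and `a = e₃`, `a' = e₁`, `b, b' = (±c, 0, 1)/√(1 + c²)` attain it.
-/

open Matrix Kronecker

/-- The three Pauli matrices `σ_x, σ_y, σ_z`. -/
noncomputable def pauli : Fin 3 → Matrix (Fin 2) (Fin 2) ℂ :=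
  ![!![0, 1; 1, 0], !![0, -Complex.I; Complex.I, 0], !![1, 0; 0, -1]]

/-- `a · σ` for a real 3-vector `a`. -/
noncomputable def dotPauli (a : Fin 3 → ℝ) : Matrix (Fin 2) (Fin 2) ℂ :=
  ∑ i, (a i : ℂ) • pauli i

/-- The CHSH-Bell expectation `⟨ψ| a·σ⊗b·σ + a·σ⊗b'·σ + a'·σ⊗b·σ − a'·σ⊗b'·σ |ψ⟩`. -/
noncomputable def bellExp (ψ : Fin 2 × Fin 2 → ℂ) (a a' b b' : Fin 3 → ℝ) : ℝ :=
  (star ψ ⬝ᵥ ((dotPauli a ⊗ₖ dotPauli b + dotPauli a ⊗ₖ dotPauli b' +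
      dotPauli a' ⊗ₖ dotPauli b - dotPauli a' ⊗ₖ dotPauli b').mulVec ψ)).re

noncomputable def schmidtState (α β : ℝ) : Fin 2 × Fin 2 → ℂ :=
  fun p => if p = (0, 0) then (α : ℂ) else if p = (1, 1) then (β : ℂ) else 0

def schmidtCorrelation (α β : ℝ) : Matrix (Fin 3) (Fin 3) ℝ :=
  diagonal ![2 * α * β, -(2 * α * β), α ^ 2 + β ^ 2]

lemma re_correlation_schmidtState (α β : ℝ) (a b : Fin 3 → ℝ) :
    (star (schmidtState α β) ⬝ᵥ (dotPauli a ⊗ₖ dotPauli b) *ᵥ schmidtState α β).re =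
      a ⬝ᵥ schmidtCorrelation α β *ᵥ b := by
  simp [schmidtState, schmidtCorrelation, dotProduct, mulVec, Fintype.sum_prod_type,
    Fin.sum_univ_two, Fin.sum_univ_three, dotPauli, pauli, kroneckerMap_apply, Prod.ext_iff]
  ring

lemma bellExp_schmidtState (α β : ℝ) (a a' b b' : Fin 3 → ℝ) :
    bellExp (schmidtState α β) a a' b b' =
      a ⬝ᵥ schmidtCorrelation α β *ᵥ (b + b') + a' ⬝ᵥ schmidtCorrelation α β *ᵥ (b - b') := by
  simp only [bellExp, add_mulVec, sub_mulVec, dotProduct_add, dotProduct_sub, Complex.add_re,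
    Complex.sub_re, re_correlation_schmidtState, mulVec_add, mulVec_sub]
  ring

lemma dotProduct_le_sqrt_of_dotProduct_self_eq_one {n : Type*} [Fintype n] {a : n → ℝ}
    (ha : a ⬝ᵥ a = 1) (w : n → ℝ) : a ⬝ᵥ w ≤ √(w ⬝ᵥ w) := by
  apply Real.le_sqrt_of_sq_le
  calc (a ⬝ᵥ w) ^ 2 ≤ (a ⬝ᵥ a) * (w ⬝ᵥ w) := by
        simpa only [dotProduct, sq] using Finset.sum_mul_sq_le_sq_mul_sq Finset.univ a w
    _ = w ⬝ᵥ w := by rw [ha, one_mul]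

lemma sqrt_add_sqrt_le_sqrt {x y m : ℝ} (hx : 0 ≤ x) (hy : 0 ≤ y) (hsum : x + y ≤ m)
    (hprod : 4 * x * y ≤ (m - x - y) ^ 2) : √x + √y ≤ √m := by
  have hxy : 2 * (√x * √y) ≤ m - x - y := by
    rw [← Real.sqrt_mul hx, ← Real.sqrt_sq (by linarith : 0 ≤ m - x - y),
      ← Real.sqrt_mul_self zero_le_two, ← Real.sqrt_mul (by positivity)]
    exact Real.sqrt_le_sqrt (by nlinarith)
  apply Real.le_sqrt_of_sq_le
  nlinarith [Real.sq_sqrt hx, Real.sq_sqrt hy]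

lemma sqrt_add_sqrt_le_two_mul_sqrt_one_add_sq {c P Q p q : ℝ} (hc : c ^ 2 ≤ 1) (hP : 0 ≤ P)
    (hQ : 0 ≤ Q) (hp : 0 ≤ p) (hq : 0 ≤ q) (hsum : P + p + Q + q = 4) (hpq : p * q ≤ P * Q) :
    √(c ^ 2 * P + p) + √(c ^ 2 * Q + q) ≤ 2 * √(1 + c ^ 2) := by
  have hc4 : 0 ≤ 1 - c ^ 4 := by nlinarith [sq_nonneg c]
  obtain rfl : q = 4 - P - p - Q := by linarith
  rw [show 2 * √(1 + c ^ 2) = √(4 * (1 + c ^ 2)) by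
    rw [Real.sqrt_mul zero_le_four, show (4 : ℝ) = 2 ^ 2 by norm_num, Real.sqrt_sq zero_le_two]]
  apply sqrt_add_sqrt_le_sqrt (by positivity) (by nlinarith) (by nlinarith)
  -- `(m - x - y)² - 4xy = ((P - Q) + c²(p - q))² + 4(1 - c⁴)(PQ - pq)` on `P + p + Q + q = 4`
  nlinarith [sq_nonneg ((P - Q) + c ^ 2 * (p - (4 - P - p - Q))),
    mul_nonneg hc4 (sub_nonneg.2 hpq)]

lemma diagonal_mulVec_dotProduct_self (c : ℝ) (u : Fin 3 → ℝ) :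
    (diagonal ![c, -c, 1] *ᵥ u) ⬝ᵥ (diagonal ![c, -c, 1] *ᵥ u) =
      c ^ 2 * (u 0 ^ 2 + u 1 ^ 2) + u 2 ^ 2 := by
  simp only [dotProduct, mulVec_diagonal, Fin.sum_univ_three, cons_val_zero, cons_val_one, cons_val]
  ring

lemma chsh_diagonal_le {c : ℝ} (hc : c ^ 2 ≤ 1) {a a' b b' : Fin 3 → ℝ} (ha : a ⬝ᵥ a = 1)
    (ha' : a' ⬝ᵥ a' = 1) (hb : b ⬝ᵥ b = 1) (hb' : b' ⬝ᵥ b' = 1) :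
    a ⬝ᵥ diagonal ![c, -c, 1] *ᵥ (b + b') + a' ⬝ᵥ diagonal ![c, -c, 1] *ᵥ (b - b') ≤
      2 * √(1 + c ^ 2) := by
  set u := b + b'
  set v := b - b'
  have hb3 : b 0 ^ 2 + b 1 ^ 2 + b 2 ^ 2 = 1 := by
    simpa [dotProduct, Fin.sum_univ_three, sq] using hb
  have hb'3 : b' 0 ^ 2 + b' 1 ^ 2 + b' 2 ^ 2 = 1 := by
    simpa [dotProduct, Fin.sum_univ_three, sq] using hb'
  -- `u ⊥ v` because `b` and `b'` have the same length
  have horth : u 0 * v 0 + u 1 * v 1 = -(u 2 * v 2) := by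
    simp only [u, v, Pi.add_apply, Pi.sub_apply]
    linear_combination hb3 - hb'3
  have hbessel : u 2 ^ 2 * v 2 ^ 2 ≤ (u 0 ^ 2 + u 1 ^ 2) * (v 0 ^ 2 + v 1 ^ 2) := by
    have hsq : u 2 ^ 2 * v 2 ^ 2 = (u 0 * v 0 + u 1 * v 1) ^ 2 := by rw [horth]; ring
    nlinarith [sq_nonneg (u 0 * v 1 - u 1 * v 0)]
  have hsum : (u 0 ^ 2 + u 1 ^ 2) + u 2 ^ 2 + (v 0 ^ 2 + v 1 ^ 2) + v 2 ^ 2 = 4 := by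
    simp only [u, v, Pi.add_apply, Pi.sub_apply]
    linear_combination 2 * hb3 + 2 * hb'3
  calc _ ≤ √((diagonal ![c, -c, 1] *ᵥ u) ⬝ᵥ (diagonal ![c, -c, 1] *ᵥ u)) +
        √((diagonal ![c, -c, 1] *ᵥ v) ⬝ᵥ (diagonal ![c, -c, 1] *ᵥ v)) :=
        add_le_add (dotProduct_le_sqrt_of_dotProduct_self_eq_one ha _)
          (dotProduct_le_sqrt_of_dotProduct_self_eq_one ha' _)
    _ ≤ 2 * √(1 + c ^ 2) := by
      rw [diagonal_mulVec_dotProduct_self, diagonal_mulVec_dotProduct_self]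
      exact sqrt_add_sqrt_le_two_mul_sqrt_one_add_sq hc (by positivity) (by positivity)
        (by positivity) (by positivity) hsum (by nlinarith)

lemma schmidtCorrelation_of_sq_add_sq_eq_one {α β : ℝ} (h : α ^ 2 + β ^ 2 = 1) :
    schmidtCorrelation α β = diagonal ![2 * α * β, -(2 * α * β), 1] := by
  rw [schmidtCorrelation, h]

lemma chsh_diagonal_witness {c r : ℝ} (hr : r ^ 2 = 1 + c ^ 2) (hr0 : r ≠ 0) :
    ![0, 0, 1] ⬝ᵥ diagonal ![c, -c, 1] *ᵥ (![c / r, 0, 1 / r] + ![-(c / r), 0, 1 / r]) +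
      ![1, 0, 0] ⬝ᵥ diagonal ![c, -c, 1] *ᵥ (![c / r, 0, 1 / r] - ![-(c / r), 0, 1 / r]) =
      2 * r := by
  simp only [dotProduct, mulVec_diagonal, Fin.sum_univ_three, add_cons, sub_cons, head_cons,
    tail_cons, empty_add_empty, empty_sub_empty, cons_val_zero, cons_val_one, cons_val]
  field_simp
  linear_combination -2 * hr

lemma isGreatest_bellExp_schmidtState {α β : ℝ} (h : α ^ 2 + β ^ 2 = 1) :
    IsGreatest {γ : ℝ | ∃ a a' b b' : Fin 3 → ℝ,
        a ⬝ᵥ a = 1 ∧ a' ⬝ᵥ a' = 1 ∧ b ⬝ᵥ b = 1 ∧ b' ⬝ᵥ b' = 1 ∧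
        γ = bellExp (schmidtState α β) a a' b b'}
      (2 * √(1 + (2 * α * β) ^ 2)) := by
  set c := 2 * α * β
  set r := √(1 + c ^ 2)
  have hr : r ^ 2 = 1 + c ^ 2 := Real.sq_sqrt (by positivity)
  have hr0 : r ≠ 0 := (Real.sqrt_pos.2 (by positivity)).ne'
  have hunit : ![c / r, 0, 1 / r] ⬝ᵥ ![c / r, 0, 1 / r] = 1 ∧
      ![-(c / r), 0, 1 / r] ⬝ᵥ ![-(c / r), 0, 1 / r] = 1 := by
    constructor <;>
    · simp only [dotProduct, Fin.sum_univ_three, cons_val_zero, cons_val_one, cons_val]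
      field_simp
      linear_combination -hr
  refine ⟨⟨![0, 0, 1], ![1, 0, 0], _, _, by simp [dotProduct, Fin.sum_univ_three],
    by simp [dotProduct, Fin.sum_univ_three], hunit.1, hunit.2, ?_⟩, ?_⟩
  · rw [bellExp_schmidtState, schmidtCorrelation_of_sq_add_sq_eq_one h]
    exact (chsh_diagonal_witness hr hr0).symm
  · rintro γ ⟨a, a', b, b', ha, ha', hb, hb', rfl⟩
    have hc : c ^ 2 ≤ 1 := by nlinarith [sq_nonneg (α ^ 2 - β ^ 2)]
    rw [bellExp_schmidtState, schmidtCorrelation_of_sq_add_sq_eq_one h]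
    exact chsh_diagonal_le hc ha ha' hb hb'

lemma two_mul_one_sub_pow_four_sub_pow_four {α β : ℝ} (h : α ^ 2 + β ^ 2 = 1) :
    2 * (1 - α ^ 4 - β ^ 4) = (2 * α * β) ^ 2 := by
  linear_combination (-2 * (α ^ 2 + β ^ 2 + 1)) * h

theorem stmt_14 (J B γt l₁ : ℝ) (hl : l₁ = Real.sqrt (4 * B ^ 2 + J ^ 2 * γt ^ 2)) (hlpos : 0 < l₁)
    (s : ℝ) (hs : s = 1 ∨ s = -1) :
    Real.sqrt (2 * (1 - (-(s) * Real.sqrt ((l₁ - s * (2 * B)) / (2 * l₁))) ^ 4 -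
        (Real.sqrt ((l₁ + s * (2 * B)) / (2 * l₁))) ^ 4)) =
      Real.sqrt ((l₁ ^ 2 - 4 * B ^ 2) / l₁ ^ 2) ∧
    IsGreatest {γ : ℝ | ∃ a a' b b' : Fin 3 → ℝ,
        a ⬝ᵥ a = 1 ∧ a' ⬝ᵥ a' = 1 ∧ b ⬝ᵥ b = 1 ∧ b' ⬝ᵥ b' = 1 ∧
        γ = bellExp (fun p =>
          if p = (0, 0) then ((-(s) * Real.sqrt ((l₁ - s * (2 * B)) / (2 * l₁)) : ℝ) : ℂ)
          else if p = (1, 1) then ((Real.sqrt ((l₁ + s * (2 * B)) / (2 * l₁)) : ℝ) : ℂ)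
          else 0) a a' b b'}
      (2 * Real.sqrt (1 + (l₁ ^ 2 - 4 * B ^ 2) / l₁ ^ 2)) ∧
    2 * Real.sqrt (1 + (l₁ ^ 2 - 4 * B ^ 2) / l₁ ^ 2) =
      2 * Real.sqrt (1 + (Real.sqrt ((l₁ ^ 2 - 4 * B ^ 2) / l₁ ^ 2)) ^ 2) := by
  have hs2 : s ^ 2 = 1 := by rcases hs with rfl | rfl <;> norm_num
  have ht : (s * (2 * B)) ^ 2 ≤ l₁ ^ 2 := by
    rw [hl, Real.sq_sqrt (by positivity), mul_pow, hs2]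
    nlinarith [sq_nonneg (J * γt)]
  obtain ⟨htl, htu⟩ := abs_le_of_sq_le_sq' ht hlpos.le
  have hA : 0 ≤ (l₁ - s * (2 * B)) / (2 * l₁) := div_nonneg (by linarith) (by positivity)
  have hA' : 0 ≤ (l₁ + s * (2 * B)) / (2 * l₁) := div_nonneg (by linarith) (by positivity)
  set α := -s * √((l₁ - s * (2 * B)) / (2 * l₁))
  set β := √((l₁ + s * (2 * B)) / (2 * l₁))
  have hα : α ^ 2 = (l₁ - s * (2 * B)) / (2 * l₁) := by
    rw [mul_pow, neg_sq, hs2, one_mul, Real.sq_sqrt hA]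
  have hβ : β ^ 2 = (l₁ + s * (2 * B)) / (2 * l₁) := Real.sq_sqrt hA'
  have hnorm : α ^ 2 + β ^ 2 = 1 := by
    rw [hα, hβ]
    field_simp
    ring
  have hC : (2 * α * β) ^ 2 = (l₁ ^ 2 - 4 * B ^ 2) / l₁ ^ 2 := by
    rw [show (2 * α * β) ^ 2 = 4 * α ^ 2 * β ^ 2 by ring, hα, hβ]
    field_simp
    linear_combination (-16 * B ^ 2) * hs2
  refine ⟨by rw [two_mul_one_sub_pow_four_sub_pow_four hnorm, hC], ?_, ?_⟩
  · rw [← hC]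
    exact isGreatest_bellExp_schmidtState hnorm
  · rw [Real.sq_sqrt (hC ▸ sq_nonneg _)]
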